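/- Define f : 𝒪 × ℝ² → ℝ² by f(x, s, i) = (Λ(x) − μ₁(x)s − α(x)si/(s+i), −μ₂(x)i + α(x)si/(s+i)) with the convention that si/(s+i) = 0 when s = 0 or i = 0, and define f*(x, s, i) = f(x, max(s,0), max(i,0)). If Λ, μ₁, μ₂, α are bounded on 𝒪, then for each x the map (s,i) ↦ f*(x,s,i) is Lipschitz continuous on ℝ², with Lipschitz constant uniform in x. -/
import Mathlib


noncomputable def inc (s i : ℝ) : ℝ :=
  if 0 < s ∧ 0 < i then s * i / (s + i) else 0

noncomputable def fstar {𝒪 : Type*} (Λ μ₁ μ₂ α : 𝒪 → ℝ) (x : 𝒪) (p : ℝ × ℝ) :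
    ℝ × ℝ :=
  (Λ x - μ₁ x * max p.1 0 - α x * inc (max p.1 0) (max p.2 0),
    -(μ₂ x * max p.2 0) + α x * inc (max p.1 0) (max p.2 0))

lemma inc_lip (s i s' i' : ℝ) :
    |inc s i - inc s' i'| ≤ |s - s'| + |i - i'| := by
  have key : ∀ a b : ℝ, 0 < a → 0 < b → 0 ≤ inc a b ∧ inc a b ≤ a ∧ inc a b ≤ b := by
    intro a b ha hb
    simp only [inc, if_pos (⟨ha, hb⟩ : 0 < a ∧ 0 < b)]
    refine ⟨by positivity, ?_, ?_⟩
    · rw [div_le_iff₀ (by linarith)]; nlinarith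
    · rw [div_le_iff₀ (by linarith)]; nlinarith
  by_cases h : 0 < s ∧ 0 < i <;> by_cases h' : 0 < s' ∧ 0 < i'
  · obtain ⟨hs, hi⟩ := h; obtain ⟨hs', hi'⟩ := h'
    have hD : (0:ℝ) < (s + i) * (s' + i') := by positivity
    have e : inc s i - inc s' i' =
        (s * s' * (i - i') + i * i' * (s - s')) / ((s + i) * (s' + i')) := by
      simp only [inc, if_pos (⟨hs, hi⟩ : 0 < s ∧ 0 < i),
        if_pos (⟨hs', hi'⟩ : 0 < s' ∧ 0 < i')]
      field_simp
      ring
    rw [e, abs_div, abs_of_pos hD, div_le_iff₀ hD]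
    have h1 : |s * s' * (i - i') + i * i' * (s - s')| ≤
        s * s' * |i - i'| + i * i' * |s - s'| := by
      calc |s * s' * (i - i') + i * i' * (s - s')|
          ≤ |s * s' * (i - i')| + |i * i' * (s - s')| := abs_add_le _ _
        _ = s * s' * |i - i'| + i * i' * |s - s'| := by
            have e1 : |s * s' * (i - i')| = s * s' * |i - i'| := by
              rw [abs_mul, abs_of_pos (by positivity : (0:ℝ) < s * s')]
            have e2 : |i * i' * (s - s')| = i * i' * |s - s'| := by
              rw [abs_mul, abs_of_pos (by positivity : (0:ℝ) < i * i')]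
            rw [e1, e2]
    nlinarith [abs_nonneg (i - i'), abs_nonneg (s - s'),
      mul_le_mul_of_nonneg_right (show s * s' ≤ (s + i) * (s' + i') by nlinarith)
        (abs_nonneg (i - i')),
      mul_le_mul_of_nonneg_right (show i * i' ≤ (s + i) * (s' + i') by nlinarith)
        (abs_nonneg (s - s'))]
  · obtain ⟨hs, hi⟩ := h
    have hk := key s i hs hi
    have h0 : inc s' i' = 0 := by simp [inc, h']
    rw [h0, sub_zero]
    rw [abs_of_nonneg hk.1]
    rcases not_and_or.mp h' with hc | hc
    · push_neg at hc
      nlinarith [abs_nonneg (i - i'), le_abs_self (s - s'), hk.2.1]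
    · push_neg at hc
      nlinarith [abs_nonneg (s - s'), le_abs_self (i - i'), hk.2.2]
  · obtain ⟨hs', hi'⟩ := h'
    have hk := key s' i' hs' hi'
    have h0 : inc s i = 0 := by simp [inc, h]
    rw [h0, zero_sub, abs_neg, abs_of_nonneg hk.1]
    rcases not_and_or.mp h with hc | hc
    · push_neg at hc
      nlinarith [abs_nonneg (i - i'), neg_le_abs (s - s'), hk.2.1]
    · push_neg at hc
      nlinarith [abs_nonneg (s - s'), neg_le_abs (i - i'), hk.2.2]
  · simp only [inc, if_neg h, if_neg h', sub_zero, abs_zero]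
    positivity

theorem stmt_15 {𝒪 : Type*} (Λ μ₁ μ₂ α : 𝒪 → ℝ)
    (hΛ : ∃ M, ∀ x, |Λ x| ≤ M) (hμ₁ : ∃ M, ∀ x, |μ₁ x| ≤ M)
    (hμ₂ : ∃ M, ∀ x, |μ₂ x| ≤ M) (hα : ∃ M, ∀ x, |α x| ≤ M) :
    ∃ L : ℝ, 0 ≤ L ∧ ∀ (x : 𝒪) (p q : ℝ × ℝ),
      ‖fstar Λ μ₁ μ₂ α x p - fstar Λ μ₁ μ₂ α x q‖ ≤ L * ‖p - q‖ := by
  obtain ⟨M₁, hM₁⟩ := hμ₁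
  obtain ⟨M₂, hM₂⟩ := hμ₂
  obtain ⟨M₄, hM₄⟩ := hα
  refine ⟨|M₁| + |M₂| + 2 * |M₄|, by positivity, fun x p q => ?_⟩
  set d := ‖p - q‖ with hd
  have hd0 : 0 ≤ d := norm_nonneg _
  have hfst : |p.1 - q.1| ≤ d := by
    have := norm_fst_le (p - q)
    simpa [hd, Prod.fst_sub] using this
  have hsnd : |p.2 - q.2| ≤ d := by
    have := norm_snd_le (p - q)
    simpa [hd, Prod.snd_sub] using this
  have hS : |max p.1 0 - max q.1 0| ≤ d :=
    le_trans (abs_max_sub_max_le_abs _ _ _) hfst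
  have hI : |max p.2 0 - max q.2 0| ≤ d :=
    le_trans (abs_max_sub_max_le_abs _ _ _) hsnd
  have hinc : |inc (max p.1 0) (max p.2 0) - inc (max q.1 0) (max q.2 0)| ≤ 2 * d := by
    calc |inc (max p.1 0) (max p.2 0) - inc (max q.1 0) (max q.2 0)|
        ≤ |max p.1 0 - max q.1 0| + |max p.2 0 - max q.2 0| := inc_lip _ _ _ _
      _ ≤ d + d := add_le_add hS hI
      _ = 2 * d := by ring
  have hμ₁x : |μ₁ x| ≤ |M₁| := le_trans (hM₁ x) (le_abs_self M₁)
  have hμ₂x : |μ₂ x| ≤ |M₂| := le_trans (hM₂ x) (le_abs_self M₂)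
  have hαx : |α x| ≤ |M₄| := le_trans (hM₄ x) (le_abs_self M₄)
  rw [Prod.norm_def]
  simp only [fstar, Prod.fst_sub, Prod.snd_sub]
  apply max_le
  · have e : (Λ x - μ₁ x * max p.1 0 - α x * inc (max p.1 0) (max p.2 0)) -
        (Λ x - μ₁ x * max q.1 0 - α x * inc (max q.1 0) (max q.2 0)) =
        -(μ₁ x * (max p.1 0 - max q.1 0)) -
          α x * (inc (max p.1 0) (max p.2 0) - inc (max q.1 0) (max q.2 0)) := by ring
    rw [Real.norm_eq_abs, e]
    calc |-(μ₁ x * (max p.1 0 - max q.1 0)) -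
          α x * (inc (max p.1 0) (max p.2 0) - inc (max q.1 0) (max q.2 0))|
        ≤ |μ₁ x| * |max p.1 0 - max q.1 0| +
          |α x| * |inc (max p.1 0) (max p.2 0) - inc (max q.1 0) (max q.2 0)| := by
          rw [sub_eq_add_neg]
          refine le_trans (abs_add_le _ _) ?_
          rw [abs_neg, abs_neg, abs_mul, abs_mul]
      _ ≤ |M₁| * d + |M₄| * (2 * d) := by
          gcongr
      _ ≤ (|M₁| + |M₂| + 2 * |M₄|) * d := by nlinarith [abs_nonneg M₂]
  · have e : (-(μ₂ x * max p.2 0) + α x * inc (max p.1 0) (max p.2 0)) -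
        (-(μ₂ x * max q.2 0) + α x * inc (max q.1 0) (max q.2 0)) =
        -(μ₂ x * (max p.2 0 - max q.2 0)) +
          α x * (inc (max p.1 0) (max p.2 0) - inc (max q.1 0) (max q.2 0)) := by ring
    rw [Real.norm_eq_abs, e]
    calc |-(μ₂ x * (max p.2 0 - max q.2 0)) +
          α x * (inc (max p.1 0) (max p.2 0) - inc (max q.1 0) (max q.2 0))|
        ≤ |μ₂ x| * |max p.2 0 - max q.2 0| +
          |α x| * |inc (max p.1 0) (max p.2 0) - inc (max q.1 0) (max q.2 0)| := by
          refine le_trans (abs_add_le _ _) ?_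
          rw [abs_neg, abs_mul, abs_mul]
      _ ≤ |M₂| * d + |M₄| * (2 * d) := by gcongr
      _ ≤ (|M₁| + |M₂| + 2 * |M₄|) * d := by nlinarith [abs_nonneg M₁]
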